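/- arXiv:2403.00958 — 2 statements merged into one kernel-verified Lean document; each statement's English description precedes it below -/
import Mathlib

section
/- If P is a type-C poset of height one whose relation graph RG(P) has connected components K_1,…,K_m, then the Lie algebra g_C(P) is isomorphic to the direct sum of the Lie algebras g_C(P_{K_i}), i = 1,…,m, where P_{K_i} is the unique type-C poset with RG(P_{K_i}) = K_i. -/
open scoped DirectSum

namespace LiePoset

/-- A type-C poset on the ground set `{-n, …, -1, 1, …, n} ⊆ ℤ`:
a partial order `le` supported on that set such that `i ≼ j` implies `i ≤ j` in `ℤ`,
and for `i ≠ -j`, `i ≼ j ↔ -j ≼ -i`. -/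
structure TypeCPoset (n : ℕ) where
  le : ℤ → ℤ → Prop
  supp : ∀ ⦃i j : ℤ⦄, le i j → i ≠ 0 ∧ |i| ≤ (n : ℤ) ∧ j ≠ 0 ∧ |j| ≤ (n : ℤ)
  refl : ∀ i : ℤ, i ≠ 0 → |i| ≤ (n : ℤ) → le i i
  antisymm : ∀ ⦃i j : ℤ⦄, le i j → le j i → i = j
  trans : ∀ ⦃i j k : ℤ⦄, le i j → le j k → le i k
  compat : ∀ ⦃i j : ℤ⦄, le i j → i ≤ j
  nsymm : ∀ ⦃i j : ℤ⦄, i ≠ -j → (le i j ↔ le (-j) (-i))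

namespace TypeCPoset

variable {n : ℕ}

/-- The strict relation `i ≺ j` of a type-C poset. -/
def lt (P : TypeCPoset n) (i j : ℤ) : Prop := P.le i j ∧ i ≠ j

/-- `P` has height one: every chain of `P` has cardinality at most two. -/
def HeightOne (P : TypeCPoset n) : Prop := ∀ i j k : ℤ, P.lt i j → P.lt j k → False

/-- `P` is separable: there is no relation `x ≺ y` with `x` negative and `y` positive. -/
def Separable (P : TypeCPoset n) : Prop := ∀ i j : ℤ, i < 0 → 0 < j → ¬ P.lt i j

/-- `P` has height `(1,1)`: `P⁺` has height exactly one and `P` has height exactly one. -/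
def Height11 (P : TypeCPoset n) : Prop :=
  P.HeightOne ∧ ∃ i j : ℤ, 0 < i ∧ 0 < j ∧ P.lt i j

/-- `P` has height `(0,1)`: `P⁺` has height zero and `P` has height exactly one. -/
def Height01 (P : TypeCPoset n) : Prop :=
  P.HeightOne ∧ (∀ i j : ℤ, 0 < i → 0 < j → ¬ P.lt i j) ∧ ∃ i j : ℤ, P.lt i j

end TypeCPoset

/-- The vertex set of the relation graph: the positive elements `{1, …, n}`. -/
abbrev Pos (n : ℕ) : Type := {i : ℤ // i ∈ Finset.Icc (1 : ℤ) (n : ℤ)}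

/-- The matrix index set `{-n, …, -1, 1, …, n}`. -/
abbrev Idx (n : ℕ) : Type := {i : ℤ // i ∈ (Finset.Icc (-(n : ℤ)) (n : ℤ)).erase 0}

/-- Negation on the index set. -/
def Idx.neg {n : ℕ} (a : Idx n) : Idx n :=
  ⟨-a.val, by
    have h := a.property
    simp only [Finset.mem_erase, Finset.mem_Icc] at h ⊢
    omega⟩

/-- A positive vertex as a matrix index. -/
def Pos.toIdx {n : ℕ} (i : Pos n) : Idx n :=
  ⟨i.val, by
    have h := i.property
    simp only [Finset.mem_erase, Finset.mem_Icc] at h ⊢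
    omega⟩

/-- `2n × 2n` complex matrices, with rows and columns indexed by `{-n, …, -1, 1, …, n}`. -/
abbrev Mat (n : ℕ) : Type := Matrix (Idx n) (Idx n) ℂ

namespace TypeCPoset

variable {n : ℕ}

/-- `D_i = E_{-i,-i} - E_{i,i}`. -/
def Dmat (i : Pos n) : Mat n :=
  Matrix.single i.toIdx.neg i.toIdx.neg 1 - Matrix.single i.toIdx i.toIdx 1

/-- `R^±_{i,j} = E_{-i,j} + E_{-j,i}`. -/
def Rpm (i j : Pos n) : Mat n :=
  Matrix.single i.toIdx.neg j.toIdx 1 + Matrix.single j.toIdx.neg i.toIdx 1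

/-- `R_{i,j} = E_{-j,-i} - E_{i,j}`. -/
def Rdash (i j : Pos n) : Mat n :=
  Matrix.single j.toIdx.neg i.toIdx.neg 1 - Matrix.single i.toIdx j.toIdx 1

/-- `E_{-i,i}`. -/
def Eloop (i : Pos n) : Mat n := Matrix.single i.toIdx.neg i.toIdx 1

/-- The standard spanning set of the type-C Lie poset algebra `g_C(P)`. -/
def gcSet (P : TypeCPoset n) : Set (Mat n) :=
  {M | (∃ i : Pos n, M = Dmat i)
      ∨ (∃ i j : Pos n, P.lt (-j.val) (-i.val) ∧ M = Rdash i j)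
      ∨ (∃ i j : Pos n, P.lt (-i.val) j.val ∧ P.lt (-j.val) i.val ∧ M = Rpm i j)
      ∨ (∃ i : Pos n, P.lt (-i.val) i.val ∧ M = Eloop i)}

/-- The simple graph underlying the relation graph `RG(P)`:
vertices `{1, …, n}`, with `i` adjacent to `j` (for `i ≠ j`) whenever there is a
(dashed or non-dashed) edge between them. -/
def RG (P : TypeCPoset n) : SimpleGraph (Pos n) where
  Adj i j := i ≠ j ∧ (P.lt (-i.val) j.val ∨ P.lt (-j.val) i.val ∨
      P.lt (-i.val) (-j.val) ∨ P.lt (-j.val) (-i.val))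
  symm := by
    constructor
    intro i j h
    exact ⟨h.1.symm, by tauto⟩
  loopless := by
    constructor
    intro i h
    exact h.1 rfl

/-- `RG(P)` has a (non-dashed) self-loop at vertex `i`, i.e. `-i ≺ i`. -/
def HasLoopAt (P : TypeCPoset n) (i : Pos n) : Prop := P.lt (-i.val) i.val

/-- There is a dashed edge `{i,j}` in `RG(P)`. -/
def DashedEdge (P : TypeCPoset n) (i j : Pos n) : Prop :=
  P.lt (-i.val) (-j.val) ∨ P.lt (-j.val) (-i.val)

/-- There is a non-dashed edge `{i,j}` in `RG(P)` (a self-loop when `i = j`). -/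
def NonDashedEdge (P : TypeCPoset n) (i j : Pos n) : Prop :=
  P.lt (-i.val) j.val ∨ P.lt (-j.val) i.val

open scoped Classical in
/-- The set of non-dashed edges of `RG(P)` (including self-loops). -/
noncomputable def edgesND (P : TypeCPoset n) : Finset (Sym2 (Pos n)) :=
  Finset.univ.filter fun e => ∃ i j : Pos n, e = s(i, j) ∧ NonDashedEdge P i j

open scoped Classical in
/-- The set of dashed edges of `RG(P)`. -/
noncomputable def edgesD (P : TypeCPoset n) : Finset (Sym2 (Pos n)) :=
  Finset.univ.filter fun e => ∃ i j : Pos n, e = s(i, j) ∧ i ≠ j ∧ DashedEdge P i j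

/-- `|E(P)|`, the number of edges of `RG(P)`. -/
noncomputable def numEdges (P : TypeCPoset n) : ℕ := (P.edgesND).card + (P.edgesD).card

/-- The cycles of `RG(P)`, recorded by their edge sets: a self-loop at `v`, or a cycle
of the underlying simple graph.  A cycle has an odd (resp. even) number of vertices
iff its edge set has odd (resp. even) cardinality. -/
def cycles (P : TypeCPoset n) : Set (Finset (Sym2 (Pos n))) :=
  {s | ∃ v : Pos n, P.HasLoopAt v ∧ s = {s(v, v)}} ∪
  {s | ∃ (v : Pos n) (p : (RG P).Walk v v), p.IsCycle ∧ s = p.edges.toFinset}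

/-- The cycles of `RG(P)` contained in the connected component `c`. -/
def cyclesIn (P : TypeCPoset n) (c : (RG P).ConnectedComponent) :
    Set (Finset (Sym2 (Pos n))) :=
  {s | ∃ v : Pos n, (RG P).connectedComponentMk v = c ∧
    ((P.HasLoopAt v ∧ s = {s(v, v)}) ∨
      ∃ p : (RG P).Walk v v, p.IsCycle ∧ s = p.edges.toFinset)}

/-- `η(P)`: the number of connected components of `RG(P)` containing no odd cycles. -/
noncomputable def eta (P : TypeCPoset n) : ℕ :=
  Nat.card {c : (RG P).ConnectedComponent // ¬ ∃ s ∈ P.cyclesIn c, Odd s.card}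

/-- The vertices visited by a cycle, recorded by its edge set. -/
def cycleVerts (s : Finset (Sym2 (Pos n))) : Set (Pos n) := {v | ∃ e ∈ s, v ∈ e}

end TypeCPoset

section LieDefs

variable (L : Type*) [LieRing L] [LieAlgebra ℂ L]

/-- The kernel of the bilinear form `B_φ(x, y) = φ⁅x, y⁆`. -/
def coadjKernel (φ : Module.Dual ℂ L) : Submodule ℂ L where
  carrier := {x | ∀ y : L, φ ⁅x, y⁆ = 0}
  add_mem' := by
    intro a b ha hb y
    simp only [Set.mem_setOf_eq] at ha hb ⊢
    rw [add_lie, map_add, ha y, hb y, add_zero]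
  zero_mem' := by
    intro y
    rw [zero_lie, map_zero]
  smul_mem' := by
    intro c x hx y
    simp only [Set.mem_setOf_eq] at hx ⊢
    rw [smul_lie, map_smul, hx y, smul_zero]

/-- The index of a Lie algebra: `ind g = min_{φ ∈ g*} dim ker(B_φ)`. -/
noncomputable def lieIndex : ℕ :=
  sInf (Set.range fun φ : Module.Dual ℂ L => Module.finrank ℂ (coadjKernel L φ))

/-- `φ` is a contact form on `L`: `L` is odd-dimensional and the restriction of
`B_φ(x, y) = φ⁅x, y⁆` to `ker φ` is nondegenerate. -/
def IsContactForm (φ : Module.Dual ℂ L) : Prop :=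
  Odd (Module.finrank ℂ L) ∧
    ∀ x : L, φ x = 0 → (∀ y : L, φ y = 0 → φ ⁅x, y⁆ = 0) → x = 0

/-- `L` is a contact Lie algebra. -/
def IsContact : Prop := ∃ φ : Module.Dual ℂ L, IsContactForm L φ

end LieDefs

end LiePoset

namespace LiePoset

attribute [local instance] LieRing.ofAssociativeRing

/-- The generators of `g_C(P)` associated with the connected component `c` of `RG(P)`;
their span is (the copy inside `g_C(P)` of) `g_C(P_K)` for `K = c`. -/
def TypeCPoset.gcSetComp {n : ℕ} (P : TypeCPoset n)
    (c : (TypeCPoset.RG P).ConnectedComponent) : Set (Mat n) :=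
  {M | (∃ i : Pos n, (TypeCPoset.RG P).connectedComponentMk i = c ∧ M = TypeCPoset.Dmat i)
      ∨ (∃ i j : Pos n, (TypeCPoset.RG P).connectedComponentMk i = c ∧
          P.lt (-j.val) (-i.val) ∧ M = TypeCPoset.Rdash i j)
      ∨ (∃ i j : Pos n, (TypeCPoset.RG P).connectedComponentMk i = c ∧
          P.lt (-i.val) j.val ∧ P.lt (-j.val) i.val ∧ M = TypeCPoset.Rpm i j)
      ∨ (∃ i : Pos n, (TypeCPoset.RG P).connectedComponentMk i = c ∧
          P.lt (-i.val) i.val ∧ M = TypeCPoset.Eloop i)}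

end LiePoset

/-!
The generators of `g_C(P)` attached to a component `K` of `RG(P)` have all their nonzero
entries in rows and columns `±i` with `i ∈ K`. Hence the spans `g_C(P_K)` sit in pairwise
distinct diagonal blocks of the matrix algebra: they are linearly independent, any two of
them multiply to zero (so they commute), and together they span `g_C(P)`. This makes
`g_C(P)` their internal, hence external, direct sum as Lie algebras.
-/

namespace Matrix

variable {ι κ : Type*} (R : Type*) (f : ι → κ)

section Semiring

variable [Semiring R]

def diagBlock (c : κ) : Submodule R (Matrix ι ι R) where
  carrier := {M | ∀ a b, M a b ≠ 0 → f a = c ∧ f b = c}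
  add_mem' {M N} hM hN a b hab := by
    by_cases hMab : M a b = 0
    · exact hN a b (by simpa [hMab] using hab)
    · exact hM a b hMab
  zero_mem' a b hab := absurd rfl hab
  smul_mem' r M hM a b hab := hM a b fun h => hab (by simp [h])

variable {R f}

theorem single_mem_diagBlock [DecidableEq ι] {c : κ} {a b : ι} (ha : f a = c) (hb : f b = c)
    (r : R) : single a b r ∈ diagBlock R f c := by
  intro a' b' h
  obtain ⟨rfl, rfl⟩ : a = a' ∧ b = b' := by
    by_contra hne
    exact h (single_apply_of_ne a b r a' b' hne)
  exact ⟨ha, hb⟩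

theorem mul_eq_zero_of_mem_diagBlock [Fintype ι] {c c' : κ} (hcc : c ≠ c')
    {M N : Matrix ι ι R} (hM : M ∈ diagBlock R f c) (hN : N ∈ diagBlock R f c') :
    M * N = 0 := by
  ext a b
  refine Finset.sum_eq_zero fun k _ => ?_
  by_contra h
  exact hcc ((hM a k (left_ne_zero_of_mul h)).2.symm.trans (hN k b (right_ne_zero_of_mul h)).1)

end Semiring

theorem iSupIndep_diagBlock [Ring R] : iSupIndep (diagBlock R f) := by
  classical
  rw [iSupIndep_iff_finsetSum_eq_zero_imp_eq_zero]
  intro s M hM hsum c hc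
  ext a b
  by_contra hab
  have hfa : f a = c := (hM c hc a b hab).1
  -- only the block of `f a` contributes to the entry `(a, b)` of the sum
  have hentry : (∑ c' ∈ s, M c') a b = M c a b := by
    rw [sum_apply, Finset.sum_eq_single c]
    · intro c' hc' hne
      by_contra h
      exact hne ((hM c' hc' a b h).1.symm.trans hfa)
    · exact fun hcs => absurd hc hcs
  exact hab (hentry.symm.trans (by rw [hsum]))

end Matrix

namespace LieSubalgebra

variable {R L ι : Type*} [CommRing R] [LieRing L] [LieAlgebra R L]

theorem nonempty_lieEquiv_directSum_of_iSupIndep (A : ι → LieSubalgebra R L)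
    (hind : iSupIndep fun i => (A i).toSubmodule)
    (hcomm : Pairwise fun i j => ∀ x ∈ A i, ∀ y ∈ A j, ⁅x, y⁆ = 0)
    (K : LieSubalgebra R L) (hK : K.toSubmodule = ⨆ i, (A i).toSubmodule) :
    Nonempty (K ≃ₗ⁅R⁆ ⨁ i, A i) := by
  classical
  let φ := DirectSum.toLieAlgebra L (fun i => (A i).incl)
    fun i j hij x y => hcomm hij x x.2 y y.2
  have hinj : Function.Injective φ := hind.dfinsupp_lsum_injective
  have hrange : (φ.range : Set L) = K := by
    rw [← coe_toSubmodule K, hK, ← DirectSum.range_coeLinearMap]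
    rfl
  exact ⟨(LieEquiv.ofEq K φ.range hrange.symm).trans (φ.equivRangeOfInjective hinj).symm⟩

end LieSubalgebra

namespace LiePoset

attribute [local instance] LieRing.ofAssociativeRing

variable {n : ℕ}

def Idx.toPos (a : Idx n) : Pos n :=
  ⟨|a.val|, by
    have h := a.property
    simp only [Finset.mem_erase, Finset.mem_Icc] at h ⊢
    rcases abs_cases a.val with ⟨h1, h2⟩ | ⟨h1, h2⟩ <;> omega⟩

@[simp]
theorem Idx.toPos_neg (a : Idx n) : a.neg.toPos = a.toPos :=
  Subtype.ext (abs_neg a.val)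

@[simp]
theorem Pos.toIdx_toPos (i : Pos n) : i.toIdx.toPos = i := by
  have h := i.property
  simp only [Finset.mem_Icc] at h
  exact Subtype.ext (show |i.val| = i.val from abs_of_pos (by omega))

namespace TypeCPoset

variable (P : TypeCPoset n)

def componentOf (a : Idx n) : (RG P).ConnectedComponent :=
  (RG P).connectedComponentMk a.toPos

variable {P}

theorem reachable_of_lt_neg_neg {i j : Pos n} (h : P.lt (-j.val) (-i.val)) :
    (RG P).Reachable i j :=
  SimpleGraph.Adj.reachable ⟨fun hij => h.2 (by rw [hij]), Or.inr (Or.inr (Or.inr h))⟩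

theorem reachable_of_lt_neg {i j : Pos n} (h : P.lt (-i.val) j.val) : (RG P).Reachable i j := by
  by_cases hij : i = j
  · exact hij ▸ SimpleGraph.Reachable.refl i
  · exact SimpleGraph.Adj.reachable ⟨hij, Or.inl h⟩

theorem gcSetComp_subset_diagBlock (c : (RG P).ConnectedComponent) :
    P.gcSetComp c ⊆ Matrix.diagBlock ℂ P.componentOf c := by
  have hmk : ∀ {i j : Pos n}, (RG P).connectedComponentMk i = c → (RG P).Reachable i j →
      (RG P).connectedComponentMk j = c :=
    fun hi hij => hi ▸ (SimpleGraph.ConnectedComponent.sound hij).symm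
  rintro M (⟨i, hi, rfl⟩ | ⟨i, j, hi, hlt, rfl⟩ | ⟨i, j, hi, h1, -, rfl⟩ | ⟨i, hi, -, rfl⟩)
  · refine sub_mem (Matrix.single_mem_diagBlock ?_ ?_ _)
      (Matrix.single_mem_diagBlock ?_ ?_ _) <;> simpa [componentOf]
  · have hj := hmk hi (reachable_of_lt_neg_neg hlt)
    refine sub_mem (Matrix.single_mem_diagBlock ?_ ?_ _)
      (Matrix.single_mem_diagBlock ?_ ?_ _) <;> simpa [componentOf]
  · have hj := hmk hi (reachable_of_lt_neg h1)
    refine add_mem (Matrix.single_mem_diagBlock ?_ ?_ _)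
      (Matrix.single_mem_diagBlock ?_ ?_ _) <;> simpa [componentOf]
  · exact Matrix.single_mem_diagBlock (by simpa [componentOf]) (by simpa [componentOf]) _

theorem gcSet_eq_iUnion_gcSetComp : P.gcSet = ⋃ c, P.gcSetComp c := by
  ext M
  simp only [gcSet, gcSetComp, Set.mem_iUnion, Set.mem_ofPred_eq]
  constructor
  · rintro (⟨i, rfl⟩ | ⟨i, j, hlt, rfl⟩ | ⟨i, j, h1, h2, rfl⟩ | ⟨i, hlt, rfl⟩)
    · exact ⟨_, Or.inl ⟨i, rfl, rfl⟩⟩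
    · exact ⟨_, Or.inr (Or.inl ⟨i, j, rfl, hlt, rfl⟩)⟩
    · exact ⟨_, Or.inr (Or.inr (Or.inl ⟨i, j, rfl, h1, h2, rfl⟩))⟩
    · exact ⟨_, Or.inr (Or.inr (Or.inr ⟨i, rfl, hlt, rfl⟩))⟩
  · rintro ⟨c, ⟨i, -, rfl⟩ | ⟨i, j, -, hlt, rfl⟩ | ⟨i, j, -, h1, h2, rfl⟩ | ⟨i, -, hlt, rfl⟩⟩
    · exact Or.inl ⟨i, rfl⟩
    · exact Or.inr (Or.inl ⟨i, j, hlt, rfl⟩)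
    · exact Or.inr (Or.inr (Or.inl ⟨i, j, h1, h2, rfl⟩))
    · exact Or.inr (Or.inr (Or.inr ⟨i, hlt, rfl⟩))

end TypeCPoset

theorem gc_direct_sum_decomposition_general (n : ℕ) (P : TypeCPoset n)
    (g : LieSubalgebra ℂ (Mat n))
    (hg : g.toSubmodule = Submodule.span ℂ (TypeCPoset.gcSet P))
    (gc : (TypeCPoset.RG P).ConnectedComponent → LieSubalgebra ℂ (Mat n))
    (hgc : ∀ c, (gc c).toSubmodule = Submodule.span ℂ (TypeCPoset.gcSetComp P c)) :
    Nonempty (↥g ≃ₗ⁅ℂ⁆ ⨁ c : (TypeCPoset.RG P).ConnectedComponent, ↥(gc c)) := by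
  have hblock : ∀ c, (gc c).toSubmodule ≤ Matrix.diagBlock ℂ P.componentOf c := fun c => by
    rw [hgc c]
    exact Submodule.span_le.2 (P.gcSetComp_subset_diagBlock c)
  refine LieSubalgebra.nonempty_lieEquiv_directSum_of_iSupIndep gc
    ((Matrix.iSupIndep_diagBlock ℂ P.componentOf).mono hblock) ?_ g ?_
  · intro c c' hcc x hx y hy
    rw [Ring.lie_def, Matrix.mul_eq_zero_of_mem_diagBlock hcc (hblock c hx) (hblock c' hy),
      Matrix.mul_eq_zero_of_mem_diagBlock (Ne.symm hcc) (hblock c' hy) (hblock c hx), sub_zero]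
  · rw [hg, P.gcSet_eq_iUnion_gcSetComp, Submodule.span_iUnion]
    simp_rw [hgc]

/-- **Lemma (decomposition).** If `P` is a type-C poset of height one whose relation
graph has connected components `K₁, …, K_m`, then `g_C(P)` is isomorphic, as a Lie
algebra, to the direct sum of the Lie poset algebras `g_C(P_{K_i})`. -/
theorem gc_direct_sum_decomposition (n : ℕ) (P : TypeCPoset n) (hP : P.HeightOne)
    (g : LieSubalgebra ℂ (Mat n))
    (hg : g.toSubmodule = Submodule.span ℂ (TypeCPoset.gcSet P))
    (gc : (TypeCPoset.RG P).ConnectedComponent → LieSubalgebra ℂ (Mat n))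
    (hgc : ∀ c, (gc c).toSubmodule = Submodule.span ℂ (TypeCPoset.gcSetComp P c)) :
    Nonempty (↥g ≃ₗ⁅ℂ⁆ ⨁ c : (TypeCPoset.RG P).ConnectedComponent, ↥(gc c)) :=
  gc_direct_sum_decomposition_general n P g hg gc hgc

end LiePoset
end

section
/- Let P be a connected type-C poset of height one. If the relation graph RG(P) contains two odd cycles that share more than one vertex, then g_C(P) is not contact. (In fact, under these hypotheses RG(P) contains an even cycle.) -/
/-!
Two odd cycles of `RG(P)` through common vertices `v ≠ w` and with different edge sets force an
even cycle: an arc of one cycle between `v` and `w` leaves the other, odd, cycle along an ear, and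
the ear closes up with the two arcs of the odd cycle between its ends into two cycles whose
lengths have different parity.

Along an even cycle, pick the root vector `X_k ∈ g_C(P)` of each edge. Given `φ`, if some
`φ(X_k) = 0` put `X = X_k`; otherwise put `X = ∑ (-1)ᵏ φ(X_k)⁻¹ X_k`, so that `φ(X) = 0`. Since `P`
has height one, products of root vectors vanish, so `X` commutes with all of them; and the weight
of `X_k` under `ad D_m` is a sum of contributions of the two ends of the edge, which cancel around
an even cycle. Hence `X ≠ 0` lies in the kernel of `B_φ` restricted to `ker φ`, and `φ` is not a
contact form.
-/

open scoped DirectSum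

namespace SimpleGraph.Walk

variable {V : Type*} {G : SimpleGraph V}

lemma edges_eq_of_length_eq_one {u v : V} {p : G.Walk u v} (h : p.length = 1) :
    p.edges = [s(u, v)] := by
  rw [eq_of_length_le_one h.le (p := p) (q := (adj_of_length_eq_one h).toWalk) (by simp)]
  simp

/-- A path between two distinct vertices of `S` that meets `S` only at its ends and is not a
single edge of `F`. -/
structure IsEar (S : Set V) (F : Set (Sym2 V)) {z z' : V} (B : G.Walk z z') : Prop where
  isPath : B.IsPath
  ne : z ≠ z'
  start_mem : z ∈ S
  end_mem : z' ∈ S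
  eq_or_eq_of_mem : ∀ u ∈ B.support, u ∈ S → u = z ∨ u = z'
  one_lt_length_or : 1 < B.length ∨ s(z, z') ∉ F

variable {S : Set V} {F : Set (Sym2 V)}

lemma IsEar.reverse {z z' : V} {B : G.Walk z z'} (hB : B.IsEar S F) : B.reverse.IsEar S F where
  isPath := hB.isPath.reverse
  ne := hB.ne.symm
  start_mem := hB.end_mem
  end_mem := hB.start_mem
  eq_or_eq_of_mem u hu huS := (hB.eq_or_eq_of_mem u (by simpa using hu) huS).symm
  one_lt_length_or := by simpa [Sym2.eq_swap] using hB.one_lt_length_or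

lemma IsEar.isCycle_append {z z' : V} {B : G.Walk z z'} (hB : B.IsEar S F) {C : G.Walk z' z}
    (hC : C.IsPath) (hCS : ∀ u ∈ C.support, u ∈ S) (hCF : ∀ e ∈ C.edges, e ∈ F) :
    (B.append C).IsCycle := by
  refine hB.isPath.isCycle_append hC (fun u huB huC => ?_) ?_
  · rcases hB.eq_or_eq_of_mem u (List.mem_of_mem_tail huB) (hCS u (List.mem_of_mem_tail huC))
      with rfl | rfl
    · exact (List.nodup_cons.mp (B.cons_tail_support ▸ hB.isPath.support_nodup)).1 huB
    · exact (List.nodup_cons.mp (C.cons_tail_support ▸ hC.support_nodup)).1 huC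
  · refine hB.one_lt_length_or.imp_right fun hzF => ?_
    by_contra! hlen
    have hC1 : C.length = 1 := by
      have := not_nil_iff_lt_length.mp (not_nil_of_ne (p := C) hB.ne.symm); omega
    exact hzF (by simpa [Sym2.eq_swap] using hCF _ (by simp [edges_eq_of_length_eq_one hC1]))

variable [DecidableEq V]

lemma IsTrail.card_edges_toFinset {u v : V} {p : G.Walk u v} (hp : p.IsTrail) :
    p.edges.toFinset.card = p.length :=
  length_edges p ▸ List.toFinset_card_of_nodup hp.edges_nodup

lemma IsCycle.exists_isPath_split {a z z' : V} {c : G.Walk a a} (hc : c.IsCycle)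
    (hz : z ∈ c.support) (hz' : z' ∈ c.support) (hne : z ≠ z') :
    ∃ (C : G.Walk z z') (D : G.Walk z' z), C.IsPath ∧ D.IsPath ∧
      C.length + D.length = c.length ∧ C.support ⊆ c.support ∧ D.support ⊆ c.support ∧
      ∀ e, e ∈ c.edges ↔ e ∈ C.edges ∨ e ∈ D.edges := by
  set c' := c.rotate z hz
  have hc' : c'.IsCycle := hc.rotate hz
  have hz'' : z' ∈ c'.support := (mem_support_rotate_iff ..).mpr hz'
  have hspec := c'.take_spec hz''
  refine ⟨c'.takeUntil z' hz'', c'.dropUntil z' hz'', hc'.isPath_takeUntil hz'',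
    IsCycle.isPath_of_append_right (not_nil_of_ne hne) (hspec ▸ hc'), ?_, ?_, ?_, ?_⟩
  · rw [← length_append, hspec, length_rotate]
  · exact fun u hu =>
      (mem_support_rotate_iff ..).mp (c'.support_takeUntil_subset_support hz'' hu)
  · exact fun u hu =>
      (mem_support_rotate_iff ..).mp (c'.support_dropUntil_subset_support hz'' hu)
  · intro e
    rw [← List.mem_append, ← edges_append, hspec, (c.rotate_edges z hz).perm.mem_iff]

lemma exists_isEar {x y : V} (A : G.Walk x y) (hA : A.IsPath) (hx : x ∈ S) (hy : y ∈ S)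
    (he : ∃ e ∈ A.edges, e ∉ F) : ∃ (z z' : V) (B : G.Walk z z'), B.IsEar S F := by
  induction hlen : A.length using Nat.strong_induction_on generalizing x y with | _ N ih
  by_cases hint : ∃ u ∈ A.support, u ≠ x ∧ u ≠ y ∧ u ∈ S
  · obtain ⟨u, hu, hux, huy, huS⟩ := hint
    obtain ⟨e, heA, heF⟩ := he
    rw [← A.take_spec hu, edges_append, List.mem_append] at heA
    rcases heA with heA | heA
    · exact ih _ (hlen ▸ length_takeUntil_lt_length hu huy) _ (hA.takeUntil hu) hx huS
        ⟨e, heA, heF⟩ rfl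
    · exact ih _ (hlen ▸ length_dropUntil_lt_length hu hux) _ (hA.dropUntil hu) huS hy
        ⟨e, heA, heF⟩ rfl
  · push Not at hint
    obtain ⟨e, heA, heF⟩ := he
    have hpos : 0 < A.length := length_edges A ▸ List.length_pos_of_mem heA
    refine ⟨x, y, A, hA, fun hxy => ?_, hx, hy, fun u hu huS => ?_, ?_⟩
    · subst hxy
      exact not_nil_iff_lt_length.mpr hpos (isPath_iff_nil.mp hA)
    · by_contra! h
      exact hint u hu h.1 h.2 huS
    · by_contra! h
      rw [edges_eq_of_length_eq_one (by omega), List.mem_singleton] at heA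
      exact heF (heA ▸ h.2)

lemma exists_even_isCycle_of_isEar {a z z' : V} {p : G.Walk a a} (hp : p.IsCycle)
    (hodd : Odd p.length) {B : G.Walk z z'} (hB : B.IsEar {u | u ∈ p.support} {e | e ∈ p.edges}) :
    ∃ (u : V) (c : G.Walk u u), c.IsCycle ∧ Even c.length := by
  obtain ⟨C, D, hC, hD, hlen, hCp, hDp, hedges⟩ :=
    hp.exists_isPath_split hB.start_mem hB.end_mem hB.ne
  have hBD := hB.isCycle_append hD (fun u hu => hDp hu) fun e he => (hedges e).mpr (.inr he)
  have hBC := hB.reverse.isCycle_append hC (fun u hu => hCp hu)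
    fun e he => (hedges e).mpr (.inl he)
  -- the two cycles have lengths `|B| + |D|` and `|B| + |C|`, whose sum `2|B| + |p|` is odd
  by_cases heven : Even (B.append D).length
  · exact ⟨z, _, hBD, heven⟩
  · refine ⟨z', _, hBC, ?_⟩
    rw [length_append] at heven
    rw [length_append, length_reverse]
    grind

lemma IsCycle.exists_even_isCycle {a b v w : V} {p : G.Walk a a} {q : G.Walk b b}
    (hp : p.IsCycle) (hq : q.IsCycle) (hodd : Odd p.length) (hvw : v ≠ w)
    (hvp : v ∈ p.support) (hwp : w ∈ p.support) (hvq : v ∈ q.support) (hwq : w ∈ q.support)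
    (he : ∃ e ∈ q.edges, e ∉ p.edges) :
    ∃ (u : V) (c : G.Walk u u), c.IsCycle ∧ Even c.length := by
  obtain ⟨C, D, hC, hD, -, -, -, hedges⟩ := hq.exists_isPath_split hvq hwq hvw
  obtain ⟨e, heq, hep⟩ := he
  obtain ⟨z, z', B, hB⟩ : ∃ (z z' : V) (B : G.Walk z z'),
      B.IsEar {u | u ∈ p.support} {e | e ∈ p.edges} := by
    rcases (hedges e).mp heq with heC | heD
    · exact exists_isEar C hC hvp hwp ⟨e, heC, hep⟩
    · exact exists_isEar D hD hwp hvp ⟨e, heD, hep⟩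
  exact exists_even_isCycle_of_isEar hp hodd hB

lemma exists_even_isCycle_of_odd_isCycles {a b v w : V} {p : G.Walk a a} {q : G.Walk b b}
    (hp : p.IsCycle) (hq : q.IsCycle) (hpodd : Odd p.length) (hqodd : Odd q.length)
    (hpq : p.edges.toFinset ≠ q.edges.toFinset) (hvw : v ≠ w)
    (hvp : v ∈ p.support) (hwp : w ∈ p.support) (hvq : v ∈ q.support) (hwq : w ∈ q.support) :
    ∃ (u : V) (c : G.Walk u u), c.IsCycle ∧ Even c.length := by
  by_cases hqp : ∃ e ∈ q.edges, e ∉ p.edges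
  · exact hp.exists_even_isCycle hq hpodd hvw hvp hwp hvq hwq hqp
  · refine hq.exists_even_isCycle hp hqodd hvw hvq hwq hvp hwp ?_
    by_contra! hpq'
    push Not at hqp
    exact hpq (Finset.ext fun e => by simpa using ⟨hpq' e, hqp e⟩)

end SimpleGraph.Walk

namespace LiePoset

attribute [local instance] LieRing.ofAssociativeRing

variable {n : ℕ}

lemma Pos.val_pos (a : Pos n) : 0 < a.val := by
  have h := a.property
  rw [Finset.mem_Icc] at h
  omega

@[simp] lemma Pos.toIdx_val (a : Pos n) : a.toIdx.val = a.val := rfl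

@[simp] lemma Idx.neg_val (r : Idx n) : r.neg.val = -r.val := rfl

@[simp] lemma Pos.toIdx_inj {a b : Pos n} : a.toIdx = b.toIdx ↔ a = b := by
  rw [Subtype.ext_iff, Subtype.ext_iff, Pos.toIdx_val, Pos.toIdx_val]

@[simp] lemma Pos.neg_toIdx_inj {a b : Pos n} : a.toIdx.neg = b.toIdx.neg ↔ a = b := by
  rw [Subtype.ext_iff, Subtype.ext_iff, Idx.neg_val, Idx.neg_val, Pos.toIdx_val, Pos.toIdx_val,
    neg_inj]

@[simp] lemma Pos.neg_toIdx_ne_toIdx (a b : Pos n) : a.toIdx.neg ≠ b.toIdx := by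
  have := a.val_pos
  have := b.val_pos
  rw [ne_eq, Subtype.ext_iff, Idx.neg_val, Pos.toIdx_val, Pos.toIdx_val]
  omega

@[simp] lemma Pos.toIdx_ne_neg_toIdx (a b : Pos n) : a.toIdx ≠ b.toIdx.neg :=
  (b.neg_toIdx_ne_toIdx a).symm

def Idx.abs (r : Idx n) : Pos n :=
  ⟨|r.val|, by
    have h := r.property
    simp only [Finset.mem_erase, Finset.mem_Icc] at h
    rw [Finset.mem_Icc]
    rcases abs_cases r.val with ⟨h1, h2⟩ | ⟨h1, h2⟩ <;> omega⟩

@[simp] lemma Idx.abs_toIdx (a : Pos n) : a.toIdx.abs = a :=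
  Subtype.ext (abs_of_pos a.val_pos)

@[simp] lemma Idx.abs_neg_toIdx (a : Pos n) : a.toIdx.neg.abs = a :=
  Subtype.ext ((abs_neg _).trans (abs_of_pos a.val_pos))

lemma Idx.exists_eq_toIdx_or_neg (r : Idx n) : ∃ a : Pos n, r = a.toIdx ∨ r = a.toIdx.neg := by
  refine ⟨r.abs, ?_⟩
  rcases abs_cases r.val with ⟨h1, -⟩ | ⟨h1, -⟩
  · exact .inl (Subtype.ext h1.symm)
  · exact .inr (Subtype.ext (by simp [Idx.abs, h1]))

namespace TypeCPoset

variable {P : TypeCPoset n}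

lemma lt_neg_neg {i j : ℤ} (h : P.lt i j) (hij : i ≠ -j) : P.lt (-j) (-i) :=
  ⟨(P.nsymm hij).mp h.1, fun e => h.2 (by omega)⟩

open Classical in
noncomputable def tau (P : TypeCPoset n) (v : Pos n) : ℂ :=
  if ∃ x, P.lt v.val x then -1 else 1

lemma tau_of_lt {v : Pos n} {x : ℤ} (h : P.lt v.val x) : P.tau v = -1 :=
  if_pos ⟨x, h⟩

lemma tau_of_gt (hP : P.HeightOne) {v : Pos n} {x : ℤ} (h : P.lt x v.val) : P.tau v = 1 :=
  if_neg fun ⟨_, hv⟩ => hP _ _ _ h hv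

/-- The eigenvalue of `ad D_m` on a root vector of the edge `{a, b}` is
`P.weight m a + P.weight m b`. -/
noncomputable def weight (P : TypeCPoset n) (m v : Pos n) : ℂ :=
  if v = m then P.tau v else 0

noncomputable def dDiag (m : Pos n) : Idx n → ℂ :=
  Pi.single m.toIdx.neg 1 - Pi.single m.toIdx 1

lemma Dmat_eq_diagonal (m : Pos n) : Dmat m = Matrix.diagonal (dDiag m) := by
  rw [Dmat, dDiag, ← Matrix.diagonal_single, ← Matrix.diagonal_single, Matrix.diagonal_sub]
  rfl

lemma lie_Dmat_apply (m : Pos n) (X : Mat n) (r c : Idx n) :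
    ⁅Dmat m, X⁆ r c = (dDiag m r - dDiag m c) * X r c := by
  rw [Ring.lie_def, Dmat_eq_diagonal, Matrix.sub_apply, Matrix.diagonal_mul, Matrix.mul_diagonal]
  ring

lemma dDiag_of_lt_left (hP : P.HeightOne) (m : Pos n) {r c : Idx n} (h : P.lt r.val c.val) :
    dDiag m r = P.weight m r.abs := by
  obtain ⟨a, rfl | rfl⟩ := r.exists_eq_toIdx_or_neg <;>
    simp only [Pos.toIdx_val, Idx.neg_val] at h <;>
    simp only [dDiag, weight, Pi.sub_apply, Pi.single_apply, Idx.abs_toIdx, Idx.abs_neg_toIdx,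
      Pos.toIdx_inj, Pos.neg_toIdx_inj, Pos.toIdx_ne_neg_toIdx, Pos.neg_toIdx_ne_toIdx,
      if_false, sub_zero, zero_sub]
  · rw [tau_of_lt h]
    split_ifs <;> simp
  · -- `-a ≺ c` puts some element below `a`: `-a` itself if `c = a`, and `-c` otherwise
    obtain ⟨x, hx⟩ : ∃ x, P.lt x a.val := by
      by_cases hc : c.val = a.val
      · exact ⟨-a.val, hc ▸ h⟩
      · exact ⟨-c.val, by simpa using lt_neg_neg h (by simpa using Ne.symm hc)⟩
    rw [tau_of_gt hP hx]

lemma dDiag_of_lt_right (hP : P.HeightOne) (m : Pos n) {r c : Idx n} (h : P.lt r.val c.val) :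
    dDiag m c = -P.weight m c.abs := by
  obtain ⟨b, rfl | rfl⟩ := c.exists_eq_toIdx_or_neg <;>
    simp only [Pos.toIdx_val, Idx.neg_val] at h <;>
    simp only [dDiag, weight, Pi.sub_apply, Pi.single_apply, Idx.abs_toIdx, Idx.abs_neg_toIdx,
      Pos.toIdx_inj, Pos.neg_toIdx_inj, Pos.toIdx_ne_neg_toIdx, Pos.neg_toIdx_ne_toIdx,
      if_false, sub_zero, zero_sub]
  · rw [tau_of_gt hP h]
  · have hrb : r.val ≠ b.val := fun hrb => by
      have := P.compat h.1
      have := b.val_pos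
      omega
    rw [tau_of_lt (x := -r.val) (by simpa using lt_neg_neg h (by simpa using hrb))]
    split_ifs <;> simp

lemma dDiag_sub_dDiag_of_lt (hP : P.HeightOne) (m : Pos n) {r c : Idx n}
    (h : P.lt r.val c.val) :
    dDiag m r - dDiag m c = P.weight m r.abs + P.weight m c.abs := by
  rw [dDiag_of_lt_left hP m h, dDiag_of_lt_right hP m h, sub_neg_eq_add]

def IsStrictlySupported (P : TypeCPoset n) (M : Mat n) : Prop :=
  ∀ r c, M r c ≠ 0 → P.lt r.val c.val

lemma IsStrictlySupported.sub {A B : Mat n} (hA : P.IsStrictlySupported A)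
    (hB : P.IsStrictlySupported B) : P.IsStrictlySupported (A - B) := by
  intro r c h
  by_cases hA0 : A r c = 0
  · rw [Matrix.sub_apply, hA0, zero_sub, neg_ne_zero] at h
    exact hB r c h
  · exact hA r c hA0

lemma IsStrictlySupported.smul {A : Mat n} (hA : P.IsStrictlySupported A) (t : ℂ) :
    P.IsStrictlySupported (t • A) :=
  fun r c h => hA r c (right_ne_zero_of_mul h)

lemma IsStrictlySupported.mul_eq_zero (hP : P.HeightOne) {A B : Mat n}
    (hA : P.IsStrictlySupported A) (hB : P.IsStrictlySupported B) : A * B = 0 := by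
  ext r c
  rw [Matrix.mul_apply, Matrix.zero_apply]
  refine Finset.sum_eq_zero fun k _ => ?_
  by_contra h
  exact hP _ _ _ (hA r k (left_ne_zero_of_mul h)) (hB k c (right_ne_zero_of_mul h))

lemma IsStrictlySupported.lie_eq_zero (hP : P.HeightOne) {A B : Mat n}
    (hA : P.IsStrictlySupported A) (hB : P.IsStrictlySupported B) : ⁅A, B⁆ = 0 := by
  rw [Ring.lie_def, hA.mul_eq_zero hP hB, hB.mul_eq_zero hP hA, sub_zero]

lemma lie_Dmat_of_isStrictlySupported (hP : P.HeightOne) {X : Mat n}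
    (hX : P.IsStrictlySupported X) {a b : Pos n}
    (hab : ∀ r c, X r c ≠ 0 → s(r.abs, c.abs) = s(a, b)) (m : Pos n) :
    ⁅Dmat m, X⁆ = (P.weight m a + P.weight m b) • X := by
  ext r c
  rw [lie_Dmat_apply, Matrix.smul_apply, smul_eq_mul]
  by_cases h : X r c = 0
  · rw [h, mul_zero, mul_zero]
  rw [dDiag_sub_dDiag_of_lt hP m (hX r c h)]
  rcases Sym2.eq_iff.mp (hab r c h) with ⟨hr, hc⟩ | ⟨hr, hc⟩
  · rw [hr, hc]
  · rw [hr, hc, add_comm]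

lemma Rpm_apply_ne_zero {i j : Pos n} {r c : Idx n} (h : Rpm i j r c ≠ 0) :
    r = i.toIdx.neg ∧ c = j.toIdx ∨ r = j.toIdx.neg ∧ c = i.toIdx := by
  simp only [Rpm, Matrix.add_apply, Matrix.single_apply] at h
  grind

lemma Rdash_apply_ne_zero {i j : Pos n} {r c : Idx n} (h : Rdash i j r c ≠ 0) :
    r = j.toIdx.neg ∧ c = i.toIdx.neg ∨ r = i.toIdx ∧ c = j.toIdx := by
  simp only [Rdash, Matrix.sub_apply, Matrix.single_apply] at h
  grind

lemma isStrictlySupported_Rpm {i j : Pos n} (h₁ : P.lt (-i.val) j.val)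
    (h₂ : P.lt (-j.val) i.val) : P.IsStrictlySupported (Rpm i j) := by
  intro r c h
  rcases Rpm_apply_ne_zero h with ⟨rfl, rfl⟩ | ⟨rfl, rfl⟩
  exacts [h₁, h₂]

lemma isStrictlySupported_Rdash {i j : Pos n} (h : P.lt (-j.val) (-i.val)) :
    P.IsStrictlySupported (Rdash i j) := by
  intro r c hrc
  rcases Rdash_apply_ne_zero hrc with ⟨rfl, rfl⟩ | ⟨rfl, rfl⟩
  · exact h
  · have := i.val_pos
    have := j.val_pos
    simpa using lt_neg_neg h (by omega)

lemma isStrictlySupported_Eloop {i : Pos n} (h : P.lt (-i.val) i.val) :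
    P.IsStrictlySupported (Eloop i) := by
  intro r c hrc
  obtain ⟨rfl, rfl⟩ : i.toIdx.neg = r ∧ i.toIdx = c := by
    by_contra hne
    exact hrc (Matrix.single_apply_of_ne _ _ _ _ _ hne)
  exact h

lemma isStrictlySupported_of_mem_gcSet {M : Mat n} (hM : M ∈ P.gcSet) :
    (∃ i, M = Dmat i) ∨ P.IsStrictlySupported M := by
  rcases hM with hD | ⟨i, j, h, rfl⟩ | ⟨i, j, h₁, h₂, rfl⟩ | ⟨i, h, rfl⟩
  exacts [.inl hD, .inr (isStrictlySupported_Rdash h), .inr (isStrictlySupported_Rpm h₁ h₂),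
    .inr (isStrictlySupported_Eloop h)]

lemma Rpm_ne_zero (i j : Pos n) : Rpm i j ≠ 0 := fun h => by
  have := congrFun₂ h i.toIdx.neg j.toIdx
  simp only [Rpm, Matrix.add_apply, Matrix.single_apply_same, Matrix.single_apply,
    Matrix.zero_apply] at this
  split_ifs at this <;> norm_num at this

lemma Rdash_ne_zero (i j : Pos n) : Rdash i j ≠ 0 := fun h => by
  have := congrFun₂ h j.toIdx.neg i.toIdx.neg
  simp [Rdash] at this

open Classical in
noncomputable def edgeGen (P : TypeCPoset n) (a b : Pos n) : Mat n :=
  if P.lt (-a.val) b.val ∨ P.lt (-b.val) a.val then Rpm a b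
  else if P.lt (-a.val) (-b.val) then Rdash b a else Rdash a b

section EdgeGen

variable {a b : Pos n} (hadj : (RG P).Adj a b)
include hadj

lemma edgeGen_cases :
    (P.lt (-a.val) b.val ∧ P.lt (-b.val) a.val ∧ P.edgeGen a b = Rpm a b) ∨
    (P.lt (-a.val) (-b.val) ∧ P.edgeGen a b = Rdash b a) ∨
    (P.lt (-b.val) (-a.val) ∧ P.edgeGen a b = Rdash a b) := by
  have hab : a.val ≠ b.val := fun h => hadj.1 (Subtype.ext h)
  have := a.val_pos
  have := b.val_pos
  unfold edgeGen
  split_ifs with hND hD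
  · rcases hND with h | h
    exacts [.inl ⟨h, by simpa using lt_neg_neg h (by omega), rfl⟩,
      .inl ⟨by simpa using lt_neg_neg h (by omega), h, rfl⟩]
  · exact .inr (.inl ⟨hD, rfl⟩)
  · have := hadj.2
    exact .inr (.inr ⟨by tauto, rfl⟩)

lemma edgeGen_mem_gcSet : P.edgeGen a b ∈ P.gcSet := by
  rcases edgeGen_cases hadj with ⟨h₁, h₂, he⟩ | ⟨h, he⟩ | ⟨h, he⟩ <;> rw [he]
  exacts [.inr (.inr (.inl ⟨a, b, h₁, h₂, rfl⟩)), .inr (.inl ⟨b, a, h, rfl⟩),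
    .inr (.inl ⟨a, b, h, rfl⟩)]

lemma isStrictlySupported_edgeGen : P.IsStrictlySupported (P.edgeGen a b) := by
  rcases edgeGen_cases hadj with ⟨h₁, h₂, he⟩ | ⟨h, he⟩ | ⟨h, he⟩ <;> rw [he]
  exacts [isStrictlySupported_Rpm h₁ h₂, isStrictlySupported_Rdash h, isStrictlySupported_Rdash h]

lemma edgeGen_apply_ne_zero {r c : Idx n} (h : P.edgeGen a b r c ≠ 0) :
    s(r.abs, c.abs) = s(a, b) := by
  rcases edgeGen_cases hadj with ⟨-, -, he⟩ | ⟨-, he⟩ | ⟨-, he⟩ <;> rw [he] at h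
  · rcases Rpm_apply_ne_zero h with ⟨rfl, rfl⟩ | ⟨rfl, rfl⟩ <;> simp [Sym2.eq_swap]
  all_goals rcases Rdash_apply_ne_zero h with ⟨rfl, rfl⟩ | ⟨rfl, rfl⟩ <;> simp [Sym2.eq_swap]

lemma edgeGen_ne_zero : P.edgeGen a b ≠ 0 := by
  rcases edgeGen_cases hadj with ⟨-, -, he⟩ | ⟨-, he⟩ | ⟨-, he⟩ <;> rw [he]
  exacts [Rpm_ne_zero a b, Rdash_ne_zero b a, Rdash_ne_zero a b]

lemma lie_Dmat_edgeGen (hP : P.HeightOne) (m : Pos n) :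
    ⁅Dmat m, P.edgeGen a b⁆ = (P.weight m a + P.weight m b) • P.edgeGen a b :=
  lie_Dmat_of_isStrictlySupported hP (isStrictlySupported_edgeGen hadj)
    (fun _ _ => edgeGen_apply_ne_zero hadj) m

end EdgeGen

/-- The alternating sum `∑ₖ (-1)ᵏ Φ(Xₖ)⁻¹ Xₖ` of the edge generators `X₀, X₁, …` along a walk. -/
noncomputable def altSum (P : TypeCPoset n) (Φ : Module.Dual ℂ (Mat n)) :
    {a b : Pos n} → (RG P).Walk a b → Mat n
  | _, _, .nil => 0
  | a, _, .cons (v := c) _ q => (Φ (P.edgeGen a c))⁻¹ • P.edgeGen a c - altSum P Φ q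

variable {Φ : Module.Dual ℂ (Mat n)}

@[simp] lemma altSum_nil {a : Pos n} : P.altSum Φ (.nil : (RG P).Walk a a) = 0 := rfl

@[simp] lemma altSum_cons {a b c : Pos n} (h : (RG P).Adj a c) (q : (RG P).Walk c b) :
    P.altSum Φ (.cons h q) = (Φ (P.edgeGen a c))⁻¹ • P.edgeGen a c - P.altSum Φ q := rfl

lemma altSum_mem_span {a b : Pos n} (q : (RG P).Walk a b) :
    P.altSum Φ q ∈ Submodule.span ℂ P.gcSet := by
  induction q with
  | nil => exact Submodule.zero_mem _
  | cons hadj q ih =>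
    exact Submodule.sub_mem _
      (Submodule.smul_mem _ _ (Submodule.subset_span (edgeGen_mem_gcSet hadj))) ih

lemma isStrictlySupported_altSum {a b : Pos n} (q : (RG P).Walk a b) :
    P.IsStrictlySupported (P.altSum Φ q) := by
  induction q with
  | nil => exact fun _ _ h => absurd rfl h
  | cons hadj q ih => exact ((isStrictlySupported_edgeGen hadj).smul _).sub ih

lemma altSum_apply_ne_zero {a b : Pos n} (q : (RG P).Walk a b) {r c : Idx n}
    (h : P.altSum Φ q r c ≠ 0) : s(r.abs, c.abs) ∈ q.edges := by
  induction q with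
  | nil => exact absurd rfl h
  | @cons u v _ hadj q ih =>
    rw [altSum_cons, Matrix.sub_apply, Matrix.smul_apply] at h
    rw [SimpleGraph.Walk.edges_cons, List.mem_cons]
    by_cases h0 : P.edgeGen u v r c = 0
    · rw [h0, smul_zero, zero_sub, neg_ne_zero] at h
      exact .inr (ih h)
    · exact .inl (edgeGen_apply_ne_zero hadj h0)

lemma map_altSum {a b : Pos n} (q : (RG P).Walk a b)
    (hq : ∀ d ∈ q.darts, Φ (P.edgeGen d.fst d.snd) ≠ 0) :
    Φ (P.altSum Φ q) = if Even q.length then 0 else 1 := by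
  induction q with
  | nil => simp
  | cons hadj q ih =>
    simp only [SimpleGraph.Walk.darts_cons, List.mem_cons, forall_eq_or_imp] at hq
    rw [altSum_cons, map_sub, map_smul, smul_eq_mul, inv_mul_cancel₀ hq.1, ih hq.2]
    by_cases hpar : Even q.length <;> simp [Nat.even_add_one, hpar]

lemma map_lie_Dmat_altSum (hP : P.HeightOne) {a b : Pos n} (q : (RG P).Walk a b)
    (hq : ∀ d ∈ q.darts, Φ (P.edgeGen d.fst d.snd) ≠ 0) (m : Pos n) :
    Φ ⁅Dmat m, P.altSum Φ q⁆ = P.weight m a - (-1) ^ q.length * P.weight m b := by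
  induction q with
  | nil => simp
  | cons hadj q ih =>
    simp only [SimpleGraph.Walk.darts_cons, List.mem_cons, forall_eq_or_imp] at hq
    obtain ⟨hX, hq⟩ := hq
    rw [altSum_cons, lie_sub, lie_smul, lie_Dmat_edgeGen hadj hP, map_sub, map_smul, map_smul,
      ih hq, smul_eq_mul, smul_eq_mul, SimpleGraph.Walk.length_cons, pow_succ]
    field_simp
    ring

lemma exists_isotropic_of_even_isCycle (hP : P.HeightOne) {z : Pos n} {c : (RG P).Walk z z}
    (hc : c.IsCycle) (heven : Even c.length) (Φ : Module.Dual ℂ (Mat n)) :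
    ∃ x ∈ Submodule.span ℂ P.gcSet, x ≠ 0 ∧ P.IsStrictlySupported x ∧ Φ x = 0 ∧
      ∀ m : Pos n, Φ ⁅Dmat m, x⁆ = 0 := by
  by_cases hΦ : ∀ d ∈ c.darts, Φ (P.edgeGen d.fst d.snd) ≠ 0
  · refine ⟨P.altSum Φ c, altSum_mem_span c, ?_, isStrictlySupported_altSum c,
      by rw [map_altSum c hΦ, if_pos heven], fun m => by
        rw [map_lie_Dmat_altSum hP c hΦ, heven.neg_one_pow, one_mul, sub_self]⟩
    -- the first edge of `c` does not recur, so the sum has a nonzero entry on it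
    obtain ⟨u, hadj, q, rfl⟩ := SimpleGraph.Walk.not_nil_iff.mp hc.not_nil
    obtain ⟨r, r', hrr'⟩ : ∃ r r', P.edgeGen z u r r' ≠ 0 := by
      by_contra! h
      exact edgeGen_ne_zero hadj (Matrix.ext h)
    have hq : P.altSum Φ q r r' = 0 := by
      by_contra h
      have hmem := altSum_apply_ne_zero q h
      rw [edgeGen_apply_ne_zero hadj hrr'] at hmem
      exact (List.nodup_cons.mp hc.edges_nodup).1 hmem
    intro h0
    have := congrFun₂ h0 r r'
    rw [altSum_cons, Matrix.sub_apply, Matrix.smul_apply, hq, sub_zero, Matrix.zero_apply,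
      smul_eq_mul] at this
    exact mul_ne_zero (inv_ne_zero (hΦ _ List.mem_cons_self)) hrr' this
  · push Not at hΦ
    obtain ⟨d, -, hd⟩ := hΦ
    refine ⟨P.edgeGen d.fst d.snd, Submodule.subset_span (edgeGen_mem_gcSet d.adj),
      edgeGen_ne_zero d.adj, isStrictlySupported_edgeGen d.adj, hd, fun m => ?_⟩
    rw [lie_Dmat_edgeGen d.adj hP, map_smul, hd, smul_zero]

lemma map_lie_eq_zero_of_isStrictlySupported (hP : P.HeightOne) {Φ : Module.Dual ℂ (Mat n)}
    {x : Mat n} (hx : P.IsStrictlySupported x) (hD : ∀ m : Pos n, Φ ⁅Dmat m, x⁆ = 0) {y : Mat n}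
    (hy : y ∈ Submodule.span ℂ P.gcSet) : Φ ⁅x, y⁆ = 0 := by
  induction hy using Submodule.span_induction with
  | mem y hy =>
    rcases isStrictlySupported_of_mem_gcSet hy with ⟨m, rfl⟩ | hy
    · rw [← lie_skew, map_neg, hD, neg_zero]
    · rw [hx.lie_eq_zero hP hy, map_zero]
  | zero => rw [lie_zero, map_zero]
  | add y z _ _ hy hz => rw [lie_add, map_add, hy, hz, add_zero]
  | smul t y _ hy => rw [lie_smul, map_smul, hy, smul_zero]

end TypeCPoset

lemma not_isContact_of_forall_exists_mem_ker {L : Type*} [LieRing L] [LieAlgebra ℂ L]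
    (g : LieSubalgebra ℂ L)
    (h : ∀ Φ : Module.Dual ℂ L, ∃ x ∈ g, x ≠ 0 ∧ Φ x = 0 ∧ ∀ y ∈ g, Φ ⁅x, y⁆ = 0) :
    ¬ IsContact g := by
  rintro ⟨φ, -, hφ⟩
  obtain ⟨Φ, hΦ⟩ := LinearMap.exists_extend (p := g.toSubmodule) φ
  have hΦφ (x : g) : Φ x = φ x := LinearMap.congr_fun hΦ x
  obtain ⟨x, hxg, hx0, hΦx, hxy⟩ := h Φ
  refine hx0 (congrArg Subtype.val (hφ ⟨x, hxg⟩ (by rwa [← hΦφ]) fun y _ => ?_))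
  rw [← hΦφ]
  exact hxy y y.2

namespace TypeCPoset

variable {P : TypeCPoset n}

lemma not_isContact_of_even_isCycle (hP : P.HeightOne) {g : LieSubalgebra ℂ (Mat n)}
    (hg : g.toSubmodule = Submodule.span ℂ P.gcSet) {z : Pos n} {c : (RG P).Walk z z}
    (hc : c.IsCycle) (heven : Even c.length) : ¬ IsContact g := by
  have hmem {y : Mat n} : y ∈ g ↔ y ∈ Submodule.span ℂ P.gcSet := by
    rw [← hg, LieSubalgebra.mem_toSubmodule]
  refine not_isContact_of_forall_exists_mem_ker g fun Φ => ?_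
  obtain ⟨x, hx, hx0, hxs, hΦx, hD⟩ := exists_isotropic_of_even_isCycle hP hc heven Φ
  exact ⟨x, hmem.mpr hx, hx0, hΦx, fun y hy =>
    map_lie_eq_zero_of_isStrictlySupported hP hxs hD (hmem.mp hy)⟩

lemma exists_isCycle_of_mem_cycles {s : Finset (Sym2 (Pos n))} (hs : s ∈ P.cycles)
    {v w : Pos n} (hvw : v ≠ w) (hv : v ∈ cycleVerts s) (hw : w ∈ cycleVerts s) :
    ∃ (a : Pos n) (p : (RG P).Walk a a), p.IsCycle ∧ s = p.edges.toFinset := by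
  rcases hs with ⟨u, -, rfl⟩ | hs
  · obtain ⟨_, he, hve⟩ := hv
    obtain ⟨_, he', hwe⟩ := hw
    rw [Finset.mem_singleton] at he he'
    subst he he'
    rw [Sym2.mem_iff, or_self] at hve hwe
    exact absurd (hve.trans hwe.symm) hvw
  · exact hs

lemma mem_support_of_mem_cycleVerts {a v : Pos n} {p : (RG P).Walk a a}
    (hv : v ∈ cycleVerts p.edges.toFinset) : v ∈ p.support := by
  obtain ⟨e, he, hve⟩ := hv
  exact SimpleGraph.Walk.mem_support_of_mem_edges (List.mem_toFinset.mp he) hve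

end TypeCPoset

end LiePoset

namespace LiePoset

attribute [local instance] LieRing.ofAssociativeRing

open TypeCPoset SimpleGraph.Walk

theorem not_contact_of_two_odd_cycles_sharing_two_vertices_general (n : ℕ) (P : TypeCPoset n)
    (hP : P.HeightOne)
    (hcyc : ∃ s t : Finset (Sym2 (Pos n)), s ∈ P.cycles ∧ t ∈ P.cycles ∧
      Odd s.card ∧ Odd t.card ∧ s ≠ t ∧
      ∃ v w : Pos n, v ≠ w ∧ v ∈ TypeCPoset.cycleVerts s ∧ v ∈ TypeCPoset.cycleVerts t ∧
        w ∈ TypeCPoset.cycleVerts s ∧ w ∈ TypeCPoset.cycleVerts t)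
    (g : LieSubalgebra ℂ (Mat n))
    (hg : g.toSubmodule = Submodule.span ℂ (TypeCPoset.gcSet P)) :
    (∃ s ∈ P.cycles, Even s.card) ∧ ¬ IsContact ↥g := by
  obtain ⟨s, t, hs, ht, hsodd, htodd, hst, v, w, hvw, hvs, hvt, hws, hwt⟩ := hcyc
  obtain ⟨a, p, hp, rfl⟩ := exists_isCycle_of_mem_cycles hs hvw hvs hws
  obtain ⟨b, q, hq, rfl⟩ := exists_isCycle_of_mem_cycles ht hvw hvt hwt
  rw [hp.isTrail.card_edges_toFinset] at hsodd
  rw [hq.isTrail.card_edges_toFinset] at htodd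
  obtain ⟨u, c, hc, heven⟩ := exists_even_isCycle_of_odd_isCycles hp hq hsodd htodd hst hvw
    (mem_support_of_mem_cycleVerts hvs) (mem_support_of_mem_cycleVerts hws)
    (mem_support_of_mem_cycleVerts hvt) (mem_support_of_mem_cycleVerts hwt)
  refine ⟨⟨c.edges.toFinset, .inr ⟨u, c, hc, rfl⟩, ?_⟩,
    not_isContact_of_even_isCycle hP hg hc heven⟩
  rwa [hc.isTrail.card_edges_toFinset]

/-- **Proposition.** Let `P` be a connected type-C poset of height one.  If `RG(P)`
contains two (distinct) odd cycles sharing more than one vertex, then in fact `RG(P)`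
contains an even cycle, and `g_C(P)` is not contact. -/
theorem not_contact_of_two_odd_cycles_sharing_two_vertices (n : ℕ) (P : TypeCPoset n)
    (hP : P.HeightOne) (hconn : (TypeCPoset.RG P).Connected)
    (hcyc : ∃ s t : Finset (Sym2 (Pos n)), s ∈ P.cycles ∧ t ∈ P.cycles ∧
      Odd s.card ∧ Odd t.card ∧ s ≠ t ∧
      ∃ v w : Pos n, v ≠ w ∧ v ∈ TypeCPoset.cycleVerts s ∧ v ∈ TypeCPoset.cycleVerts t ∧
        w ∈ TypeCPoset.cycleVerts s ∧ w ∈ TypeCPoset.cycleVerts t)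
    (g : LieSubalgebra ℂ (Mat n))
    (hg : g.toSubmodule = Submodule.span ℂ (TypeCPoset.gcSet P)) :
    (∃ s ∈ P.cycles, Even s.card) ∧ ¬ IsContact ↥g :=
  not_contact_of_two_odd_cycles_sharing_two_vertices_general n P hP hcyc g hg

end LiePoset
end
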